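/- Under the stated hypotheses, the ratio Q(x)/Δ(x) tends to J as x → a⁺. -/

import Mathlib

/-!
Put `k = 2/σ²`, `F = Δ e^z` and `R(x) = ∫_x^b Δ' e^z`. Since `z' = -k/Δ²`,
`F' = Δ' e^z - k e^z/Δ`, and `F` vanishes at `b`, so `k ∫_x^b e^z/Δ = R(x) + F(x)`, i.e.
`Q(x)/Δ(x) = J (1 + R(x)/F(x))`. Near `a` the product `ΔΔ'` is small, so `H = Δ² e^z` satisfies
`H' ≤ -(k/2) e^z` on some `(a, d]`.
Hence `∫_x^d e^z ≤ (2/k) H(x)` and `H(x) ≥ H(d) > 0`, which bound `|R(x)/F(x)|` by a constant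
times `Δ(x) → 0`.
-/

open Real Filter Set Topology intervalIntegral MeasureTheory

lemma intervalIntegrable_of_continuousOn_Ioo_of_abs_le {f : ℝ → ℝ} {x y C : ℝ}
    (hxy : x ≤ y) (hf : ContinuousOn f (Ioo x y)) (hC : ∀ t ∈ Ioo x y, |f t| ≤ C) :
    IntervalIntegrable f volume x y := by
  rw [intervalIntegrable_iff_integrableOn_Ioo_of_le hxy]
  exact ⟨hf.aestronglyMeasurable measurableSet_Ioo,
    .restrict_of_bounded (C := C) measure_Ioo_lt_top
      (ae_restrict_of_forall_mem measurableSet_Ioo hC)⟩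

lemma hasDerivAt_integral_of_continuousOn_Ioo {f : ℝ → ℝ} {a b c t : ℝ}
    (hf : ContinuousOn f (Ioo a b)) (hc : c ∈ Ioo a b) (ht : t ∈ Ioo a b) :
    HasDerivAt (fun x => ∫ s in c..x, f s) (f t) t :=
  integral_hasDerivAt_right ((hf.mono (ordConnected_Ioo.uIcc_subset hc ht)).intervalIntegrable)
    (hf.stronglyMeasurableAtFilter isOpen_Ioo t ht) (hf.continuousAt (isOpen_Ioo.mem_nhds ht))

lemma ContDiffOn.exists_abs_deriv_le {f : ℝ → ℝ} {a b : ℝ} (hab : a < b)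
    (hf : ContDiffOn ℝ 1 f (Icc a b)) : ∃ M, ∀ t ∈ Ioo a b, |deriv f t| ≤ M := by
  obtain ⟨M, hM⟩ := isCompact_Icc.exists_bound_of_continuousOn
    (hf.continuousOn_derivWithin (uniqueDiffOn_Icc hab) le_rfl)
  refine ⟨M, fun t ht => ?_⟩
  rw [← derivWithin_of_mem_nhds (Icc_mem_nhds ht.1 ht.2)]
  exact hM t (Ioo_subset_Icc_self ht)

section

variable {a b k M x : ℝ} {Δ D z : ℝ → ℝ}

lemma hasDerivAt_mul_exp {t : ℝ} (hΔt : Δ t ≠ 0) (hD : HasDerivAt Δ (D t) t)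
    (hz : HasDerivAt z (-k / Δ t ^ 2) t) :
    HasDerivAt (fun s => Δ s * exp (z s)) (D t * exp (z t) - k * (exp (z t) / Δ t)) t := by
  refine (hD.mul hz.exp).congr_deriv ?_
  field_simp
  ring

lemma hasDerivAt_sq_mul_exp {t : ℝ} (hΔt : Δ t ≠ 0) (hD : HasDerivAt Δ (D t) t)
    (hz : HasDerivAt z (-k / Δ t ^ 2) t) :
    HasDerivAt (fun s => Δ s ^ 2 * exp (z s)) ((2 * Δ t * D t - k) * exp (z t)) t := by
  refine ((hD.pow 2).mul hz.exp).congr_deriv ?_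
  simp only [Pi.pow_apply]
  field_simp
  ring

lemma exp_le_exp_of_hasDerivAt_neg_div_sq (hk : 0 ≤ k)
    (hz : ∀ t ∈ Ioo a b, HasDerivAt z (-k / Δ t ^ 2) t) {s t : ℝ} (hs : s ∈ Ioo a b)
    (ht : t ∈ Ioo a b) (hst : s ≤ t) : exp (z t) ≤ exp (z s) := by
  have hanti : AntitoneOn z (Ioo a b) :=
    antitoneOn_of_hasDerivWithinAt_nonpos (convex_Ioo a b)
      (fun t ht => (hz t ht).continuousAt.continuousWithinAt)
      (fun t ht => (hz t (interior_subset ht)).hasDerivWithinAt)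
      (fun t _ => div_nonpos_of_nonpos_of_nonneg (neg_nonpos.2 hk) (sq_nonneg _))
  exact exp_le_exp.2 (hanti hs ht hst)

lemma intervalIntegrable_mul_exp (hk : 0 ≤ k) (hDc : ContinuousOn D (Ioo a b))
    (hDM : ∀ t ∈ Ioo a b, |D t| ≤ M) (hz : ∀ t ∈ Ioo a b, HasDerivAt z (-k / Δ t ^ 2) t)
    {y : ℝ} (hx : x ∈ Ioo a b) (hxy : x ≤ y) (hyb : y ≤ b) :
    IntervalIntegrable (fun t => D t * exp (z t)) volume x y := by
  have hsub : Ioo x y ⊆ Ioo a b := Ioo_subset_Ioo hx.1.le hyb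
  refine intervalIntegrable_of_continuousOn_Ioo_of_abs_le hxy
    ((hDc.mul (HasDerivAt.continuousOn hz).rexp).mono hsub) (C := M * exp (z x)) fun t ht => ?_
  rw [abs_mul, abs_exp]
  exact mul_le_mul (hDM t (hsub ht)) (exp_le_exp_of_hasDerivAt_neg_div_sq hk hz hx (hsub ht)
    ht.1.le) (exp_pos _).le ((abs_nonneg _).trans (hDM t (hsub ht)))

lemma continuousOn_mul_exp_Icc (hk : 0 ≤ k) (hΔc : ContinuousOn Δ (Icc a b)) (hΔb : Δ b = 0)
    (hz : ∀ t ∈ Ioo a b, HasDerivAt z (-k / Δ t ^ 2) t) (hx : x ∈ Ioo a b) :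
    ContinuousOn (fun t => Δ t * exp (z t)) (Icc x b) := by
  intro t ht
  rcases ht.2.eq_or_lt with rfl | htb
  · have hΔ0 : Tendsto Δ (𝓝[Icc x t] t) (𝓝 0) := by
      simpa [ContinuousWithinAt, hΔb] using
        (hΔc t ⟨hx.1.le.trans ht.1, le_rfl⟩).mono (Icc_subset_Icc_left hx.1.le)
    simp only [ContinuousWithinAt, hΔb, zero_mul]
    refine squeeze_zero_norm' ?_ (by simpa using hΔ0.abs.const_mul (exp (z x)))
    filter_upwards [self_mem_nhdsWithin] with s hs
    rcases hs.2.eq_or_lt with rfl | hst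
    · simp [hΔb]
    rw [norm_mul, norm_eq_abs, norm_eq_abs, abs_exp, mul_comm]
    exact mul_le_mul_of_nonneg_right
      (exp_le_exp_of_hasDerivAt_neg_div_sq hk hz hx ⟨hx.1.trans_le hs.1, hst⟩ hs.1)
      (abs_nonneg _)
  · have ht' : t ∈ Ioo a b := ⟨hx.1.trans_le ht.1, htb⟩
    exact ((hΔc.continuousAt (Icc_mem_nhds ht'.1 ht'.2)).mul
      (hz t ht').continuousAt.rexp).continuousWithinAt

theorem mul_integral_exp_div_eq (hk : 0 < k) (hΔc : ContinuousOn Δ (Icc a b)) (hΔb : Δ b = 0)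
    (hΔpos : ∀ t ∈ Ioo a b, 0 < Δ t) (hD : ∀ t ∈ Ioo a b, HasDerivAt Δ (D t) t)
    (hDc : ContinuousOn D (Ioo a b)) (hDM : ∀ t ∈ Ioo a b, |D t| ≤ M)
    (hz : ∀ t ∈ Ioo a b, HasDerivAt z (-k / Δ t ^ 2) t) (hx : x ∈ Ioo a b) :
    k * ∫ t in x..b, exp (z t) / Δ t = (∫ t in x..b, D t * exp (z t)) + Δ x * exp (z x) := by
  set g : ℝ → ℝ := fun t => (∫ s in x..t, D s * exp (z s)) - Δ t * exp (z t)
  have hDE := intervalIntegrable_mul_exp hk.le hDc hDM hz hx hx.2.le le_rfl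
  have hg : ContinuousOn g (Icc x b) := by
    refine ContinuousOn.sub ?_ (continuousOn_mul_exp_Icc hk.le hΔc hΔb hz hx)
    simpa [uIcc_of_le hx.2.le] using continuousOn_primitive_interval' hDE left_mem_uIcc
  have hg' : ∀ t ∈ Ioo x b, HasDerivAt g (k * (exp (z t) / Δ t)) t := by
    intro t ht
    have ht' : t ∈ Ioo a b := ⟨hx.1.trans ht.1, ht.2⟩
    refine ((hasDerivAt_integral_of_continuousOn_Ioo
      (hDc.mul (HasDerivAt.continuousOn hz).rexp) hx ht').sub
      (hasDerivAt_mul_exp (hΔpos t ht').ne' (hD t ht') (hz t ht'))).congr_deriv ?_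
    simp only [Pi.mul_apply]
    ring
  -- `e^z/Δ` may blow up at `b`; its integrability comes from its sign.
  have hint : IntervalIntegrable (fun t => k * (exp (z t) / Δ t)) volume x b :=
    (intervalIntegrable_iff_integrableOn_Ioc_of_le hx.2.le).2 <|
      integrableOn_deriv_of_nonneg hg hg' fun t ht =>
        (mul_pos hk (div_pos (exp_pos _) (hΔpos t ⟨hx.1.trans ht.1, ht.2⟩))).le
  rw [← intervalIntegral.integral_const_mul,
    integral_eq_sub_of_hasDerivAt_of_le hx.2.le hg hg' hint]
  simp [g, hΔb]

lemma mul_integral_exp_le_sub (hΔpos : ∀ t ∈ Ioo a b, 0 < Δ t)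
    (hD : ∀ t ∈ Ioo a b, HasDerivAt Δ (D t) t) (hDc : ContinuousOn D (Ioo a b))
    (hz : ∀ t ∈ Ioo a b, HasDerivAt z (-k / Δ t ^ 2) t) {d : ℝ} (hx : x ∈ Ioo a b)
    (hd : d ∈ Ioo a b) (hxd : x ≤ d) (hsmall : ∀ t ∈ Icc x d, 4 * (Δ t * D t) ≤ k) :
    k / 2 * ∫ t in x..d, exp (z t) ≤ Δ x ^ 2 * exp (z x) - Δ d ^ 2 * exp (z d) := by
  have hsub : uIcc x d ⊆ Ioo a b := ordConnected_Ioo.uIcc_subset hx hd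
  have hH : ∀ t ∈ uIcc x d, HasDerivAt (fun s => Δ s ^ 2 * exp (z s))
      ((2 * Δ t * D t - k) * exp (z t)) t := fun t ht =>
    hasDerivAt_sq_mul_exp (hΔpos t (hsub ht)).ne' (hD t (hsub ht)) (hz t (hsub ht))
  have hexp : ContinuousOn (fun t => exp (z t)) (Ioo a b) := (HasDerivAt.continuousOn hz).rexp
  have hH' : IntervalIntegrable (fun t => (2 * Δ t * D t - k) * exp (z t)) volume x d :=
    ((((continuousOn_const.mul (HasDerivAt.continuousOn hD)).mul hDc).sub
      continuousOn_const).mul hexp |>.mono hsub).intervalIntegrable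
  have hmono : ∫ t in x..d, k / 2 * exp (z t)
      ≤ ∫ t in x..d, -((2 * Δ t * D t - k) * exp (z t)) :=
    integral_mono_on hxd ((hexp.mono hsub).intervalIntegrable.const_mul _) hH'.neg
      fun t ht => by nlinarith [hsmall t ht, exp_pos (z t)]
  rw [intervalIntegral.integral_const_mul, intervalIntegral.integral_neg,
    integral_eq_sub_of_hasDerivAt hH hH'] at hmono
  linarith

lemma abs_integral_mul_exp_le (hk : 0 < k) (hΔpos : ∀ t ∈ Ioo a b, 0 < Δ t)
    (hD : ∀ t ∈ Ioo a b, HasDerivAt Δ (D t) t) (hDc : ContinuousOn D (Ioo a b))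
    (hDM : ∀ t ∈ Ioo a b, |D t| ≤ M) (hz : ∀ t ∈ Ioo a b, HasDerivAt z (-k / Δ t ^ 2) t)
    {d : ℝ} (hx : x ∈ Ioo a b) (hd : d ∈ Ioo a b) (hxd : x ≤ d)
    (hsmall : ∀ t ∈ Icc x d, 4 * (Δ t * D t) ≤ k) :
    |∫ t in x..b, D t * exp (z t)| ≤ (2 * M / k + |∫ t in d..b, D t * exp (z t)| /
      (Δ d ^ 2 * exp (z d))) * (Δ x ^ 2 * exp (z x)) := by
  have hI := mul_integral_exp_le_sub hΔpos hD hDc hz hx hd hxd hsmall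
  have hI0 : 0 ≤ ∫ t in x..d, exp (z t) := integral_nonneg hxd fun t _ => (exp_pos _).le
  have hHd : 0 < Δ d ^ 2 * exp (z d) := by have := hΔpos d hd; positivity
  have hM : 0 ≤ M := (abs_nonneg _).trans (hDM d hd)
  have hsplit : ∫ t in x..b, D t * exp (z t)
      = (∫ t in x..d, D t * exp (z t)) + ∫ t in d..b, D t * exp (z t) :=
    (integral_add_adjacent_intervals (intervalIntegrable_mul_exp hk.le hDc hDM hz hx hxd hd.2.le)
      (intervalIntegrable_mul_exp hk.le hDc hDM hz hd hd.2.le le_rfl)).symm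
  have hnear : |∫ t in x..d, D t * exp (z t)| ≤ M * ∫ t in x..d, exp (z t) := by
    rw [← intervalIntegral.integral_const_mul, ← norm_eq_abs]
    refine norm_integral_le_of_norm_le hxd (ae_of_all _ fun t ht => ?_)
      ((((HasDerivAt.continuousOn hz).rexp.mono
        (ordConnected_Ioo.uIcc_subset hx hd)).intervalIntegrable).const_mul M)
    rw [norm_mul, norm_eq_abs, norm_eq_abs, abs_exp]
    exact mul_le_mul_of_nonneg_right (hDM t ⟨hx.1.trans ht.1, ht.2.trans_lt hd.2⟩)
      (exp_pos _).le
  set C := |∫ t in d..b, D t * exp (z t)| / (Δ d ^ 2 * exp (z d))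
  have hfar : |∫ t in d..b, D t * exp (z t)| ≤ C * (Δ x ^ 2 * exp (z x)) := by
    rw [div_mul_eq_mul_div, le_div_iff₀ hHd]
    exact mul_le_mul_of_nonneg_left (by nlinarith) (abs_nonneg _)
  calc |∫ t in x..b, D t * exp (z t)|
      ≤ M * (∫ t in x..d, exp (z t)) + C * (Δ x ^ 2 * exp (z x)) := by
        rw [hsplit]; exact (abs_add_le _ _).trans (add_le_add hnear hfar)
    _ ≤ 2 * M / k * (Δ x ^ 2 * exp (z x)) + C * (Δ x ^ 2 * exp (z x)) := by
        gcongr ?_ + _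
        calc M * ∫ t in x..d, exp (z t) = 2 * M / k * (k / 2 * ∫ t in x..d, exp (z t)) := by
              field_simp
          _ ≤ 2 * M / k * (Δ x ^ 2 * exp (z x)) :=
            mul_le_mul_of_nonneg_left (by linarith) (by positivity)
    _ = _ := by ring

theorem tendsto_integral_mul_exp_div_mul_exp (hab : a < b) (hk : 0 < k)
    (hΔc : ContinuousOn Δ (Icc a b)) (hΔa : Δ a = 0) (hΔpos : ∀ t ∈ Ioo a b, 0 < Δ t)
    (hD : ∀ t ∈ Ioo a b, HasDerivAt Δ (D t) t) (hDc : ContinuousOn D (Ioo a b))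
    (hDM : ∀ t ∈ Ioo a b, |D t| ≤ M) (hz : ∀ t ∈ Ioo a b, HasDerivAt z (-k / Δ t ^ 2) t) :
    Tendsto (fun x => (∫ t in x..b, D t * exp (z t)) / (Δ x * exp (z x))) (𝓝[>] a)
      (𝓝 0) := by
  have hΔ0 : Tendsto Δ (𝓝[>] a) (𝓝 0) :=
    hΔa ▸ (hΔc a (left_mem_Icc.2 hab.le)).tendsto.mono_left
      (nhdsWithin_le_of_mem (Icc_mem_nhdsGT hab))
  have hΔM : Tendsto (fun t => 4 * (|Δ t| * M)) (𝓝[>] a) (𝓝 0) := by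
    simpa using (hΔ0.abs.mul_const M).const_mul 4
  obtain ⟨d, hda, hd⟩ := mem_nhdsGT_iff_exists_Ioc_subset.1 <|
    inter_mem (Ioo_mem_nhdsGT hab) (hΔM.eventually (gt_mem_nhds hk))
  have hdI : d ∈ Ioo a b := (hd ⟨hda, le_rfl⟩).1
  set C := 2 * M / k + |∫ t in d..b, D t * exp (z t)| / (Δ d ^ 2 * exp (z d))
  refine squeeze_zero_norm' ?_ (by simpa using hΔ0.const_mul C)
  filter_upwards [Ioo_mem_nhdsGT hda] with x hx
  have hxI : x ∈ Ioo a b := ⟨hx.1, hx.2.trans hdI.2⟩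
  have hΔx := hΔpos x hxI
  have hsmall : ∀ t ∈ Icc x d, 4 * (Δ t * D t) ≤ k := fun t ht => by
    obtain ⟨htI, ht⟩ := hd ⟨hx.1.trans_le ht.1, ht.2⟩
    have hΔD : Δ t * D t ≤ |Δ t| * M := (le_abs_self _).trans
      (abs_mul (Δ t) (D t) ▸ mul_le_mul_of_nonneg_left (hDM t htI) (abs_nonneg _))
    linarith [show 4 * (|Δ t| * M) < k from ht]
  have hF : 0 < Δ x * exp (z x) := mul_pos hΔx (exp_pos _)
  rw [norm_div, norm_eq_abs, norm_eq_abs, abs_of_pos hF, div_le_iff₀ hF]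
  calc _ ≤ C * (Δ x ^ 2 * exp (z x)) :=
        abs_integral_mul_exp_le hk hΔpos hD hDc hDM hz hxI hdI hx.2.le hsmall
    _ = C * Δ x * (Δ x * exp (z x)) := by ring

theorem tendsto_mul_exp_neg_mul_integral_exp_div (hab : a < b) (hk : 0 < k)
    (hΔc : ContinuousOn Δ (Icc a b)) (hΔa : Δ a = 0) (hΔb : Δ b = 0)
    (hΔpos : ∀ t ∈ Ioo a b, 0 < Δ t) (hD : ∀ t ∈ Ioo a b, HasDerivAt Δ (D t) t)
    (hDc : ContinuousOn D (Ioo a b)) (hDM : ∀ t ∈ Ioo a b, |D t| ≤ M)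
    (hz : ∀ t ∈ Ioo a b, HasDerivAt z (-k / Δ t ^ 2) t) :
    Tendsto (fun x => k * exp (-z x) * (∫ t in x..b, exp (z t) / Δ t) / Δ x) (𝓝[>] a)
      (𝓝 1) := by
  have h := (tendsto_integral_mul_exp_div_mul_exp hab hk hΔc hΔa hΔpos hD hDc hDM hz).const_add 1
  rw [add_zero] at h
  refine h.congr' ?_
  filter_upwards [Ioo_mem_nhdsGT hab] with x hx
  have hΔx : Δ x ≠ 0 := (hΔpos x hx).ne'
  calc 1 + (∫ t in x..b, D t * exp (z t)) / (Δ x * exp (z x))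
      = ((∫ t in x..b, D t * exp (z t)) + Δ x * exp (z x)) / (Δ x * exp (z x)) := by
        field_simp; ring
    _ = k * (∫ t in x..b, exp (z t) / Δ t) / (Δ x * exp (z x)) := by
        rw [mul_integral_exp_div_eq hk hΔc hΔb hΔpos hD hDc hDM hz hx]
    _ = k * exp (-z x) * (∫ t in x..b, exp (z t) / Δ t) / Δ x := by
        rw [exp_neg]; field_simp

end

/-- Under the stated hypotheses, the ratio `Q(x)/Δ(x)` tends to `J`
as `x → a⁺`. -/
theorem stmt_6 (a b c σ J : ℝ) (Δ : ℝ → ℝ)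
    (hab : a < b)
    (hΔ : ContDiffOn ℝ 1 Δ (Icc a b))
    (hΔa : Δ a = 0) (hΔb : Δ b = 0)
    (hΔpos : ∀ θ ∈ Ioo a b, 0 < Δ θ)
    (hc : c ∈ Ioo a b) (hσ : 0 < σ)
    (z : ℝ → ℝ)
    (hz : ∀ x, z x = -(2 / σ ^ 2) * ∫ s in c..x, ((Δ s) ^ 2)⁻¹)
    (Q : ℝ → ℝ)
    (hQ : ∀ x, Q x = (2 * J / σ ^ 2) * Real.exp (-(z x)) *
      ∫ t in x..b, Real.exp (z t) / Δ t) :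
    Tendsto (fun x => Q x / Δ x) (𝓝[>] a) (𝓝 J) := by
  obtain ⟨M, hM⟩ := hΔ.exists_abs_deriv_le hab
  have hD : ∀ t ∈ Ioo a b, HasDerivAt Δ (deriv Δ t) t := fun t ht =>
    ((hΔ.differentiableOn one_ne_zero t (Ioo_subset_Icc_self ht)).differentiableAt
      (Icc_mem_nhds ht.1 ht.2)).hasDerivAt
  have hDc : ContinuousOn (deriv Δ) (Ioo a b) :=
    (hΔ.mono Ioo_subset_Icc_self).continuousOn_deriv_of_isOpen isOpen_Ioo le_rfl
  have hz' : ∀ t ∈ Ioo a b, HasDerivAt z (-(2 / σ ^ 2) / Δ t ^ 2) t := by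
    intro t ht
    have hinv : ContinuousOn (fun s => (Δ s ^ 2)⁻¹) (Ioo a b) :=
      ((hΔ.continuousOn.mono Ioo_subset_Icc_self).pow 2).inv₀ fun s hs =>
        (pow_pos (hΔpos s hs) 2).ne'
    rw [funext hz]
    exact ((hasDerivAt_integral_of_continuousOn_Ioo hinv hc ht).const_mul _).congr_deriv
      (div_eq_mul_inv _ _).symm
  have h := (tendsto_mul_exp_neg_mul_integral_exp_div hab (by positivity) hΔ.continuousOn hΔa hΔb
    hΔpos hD hDc hM hz').const_mul J
  rw [mul_one] at h
  refine h.congr fun x => ?_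
  rw [hQ]
  ring
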